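/- Let γ₀ be a unimodal density with |(log γ₀)'| ≤ Λ a.e., let γ(μ;c) = γ₀(μ−c), g(x;c) = ∫φ(x−μ)γ(μ;c)dμ, and m(x;w,c) = (1−w)φ(x) + w g(x;c). Then the posterior mean ζ(x;w,c) = x + ∇ log m(x;w,c) satisfies the bounded shrinkage property: |ζ(x;w,c) − x| ≤ C(1 + √(|c| + log(1/w))) for all x ∈ ℝ, where C depends only on Λ and γ₀. -/

import Mathlib

open MeasureTheory Real

/-- Standard normal density. -/
noncomputable def stdN (x : ℝ) : ℝ := (Real.sqrt (2 * Real.pi))⁻¹ * Real.exp (-x ^ 2 / 2)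

/-- Convolution `g(x;c) = ∫ φ(x−μ) γ₀(μ−c) dμ`. -/
noncomputable def conv (γ₀ : ℝ → ℝ) (c x : ℝ) : ℝ := ∫ μ : ℝ, stdN (x - μ) * γ₀ (μ - c)

/-- Marginal density `m(x;w,c) = (1−w)φ(x) + w g(x;c)`. -/
noncomputable def marg (γ₀ : ℝ → ℝ) (w c x : ℝ) : ℝ := (1 - w) * stdN x + w * conv γ₀ c x

/-- Posterior CDF of `μ` given `X = x` under the prior `(1−w)δ₀ + w γ₀(·−c)`
and likelihood `X | μ ∼ N(μ,1)`. -/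
noncomputable def postCDF (γ₀ : ℝ → ℝ) (w c x t : ℝ) : ℝ :=
  ((1 - w) * stdN x * (if (0:ℝ) ≤ t then 1 else 0)
    + w * ∫ μ in Set.Iic t, stdN (x - μ) * γ₀ (μ - c)) / marg γ₀ w c x

/-- Posterior median. -/
noncomputable def postMedian (γ₀ : ℝ → ℝ) (w c x : ℝ) : ℝ :=
  sInf {t : ℝ | 1 / 2 ≤ postCDF γ₀ w c x t}

/-!
Shifting the integration variable, `m = (1 - w) φ + w g` with `g(y) = ∫ φ(s) γ₀(y - c - s) ds`,
and differentiating under the integral gives `m' = -(1 - w) x φ + w ∫ φ(s) γ₀'(y - c - s) ds`.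
Since `|γ₀'| ≤ Λ γ₀`, the second term is at most `Λ w g ≤ Λ m` in absolute value. For the first,
`(1 - w) |x| φ(x) / m(x) ≤ |x|`, which is enough while `|x| ≤ 4 (1 + Λ) (1 + √(|c| + log (1/w)))`.
Beyond that threshold the Gaussian tail gives `|x| φ(x) ≤ w e^{-Λ |x - c|}`, while the
log-Lipschitz bound `γ₀(u) ≥ γ₀(0) e^{-Λ |u|}` gives `w g(x) ≥ K w e^{-Λ |x - c|}`.
-/

lemma stdN_pos (x : ℝ) : 0 < stdN x := by
  unfold stdN; positivity

lemma integrable_stdN : Integrable stdN := by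
  have h := (integrable_exp_neg_mul_sq (b := 1 / 2) (by norm_num)).const_mul (√(2 * π))⁻¹
  convert h using 2 with x
  unfold stdN; ring_nf

lemma hasDerivAt_stdN (x : ℝ) : HasDerivAt stdN (-x * stdN x) x := by
  have hq : HasDerivAt (fun y : ℝ => -y ^ 2 / 2) (-x) x :=
    (((hasDerivAt_pow 2 x).neg).div_const 2).congr_deriv (by norm_num; ring)
  rw [show -x * stdN x = (√(2 * π))⁻¹ * (exp (-x ^ 2 / 2) * -x) by unfold stdN; ring]
  exact hq.exp.const_mul _

lemma stdN_le_exp (x : ℝ) : stdN x ≤ exp (-x ^ 2 / 2) := by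
  have h : 1 ≤ √(2 * π) := Real.one_le_sqrt.mpr (by nlinarith [pi_gt_three])
  unfold stdN
  exact mul_le_of_le_one_left (exp_pos _).le (inv_le_one_of_one_le₀ h)

lemma antitoneOn_stdN : AntitoneOn stdN (Set.Ici 0) := by
  intro a ha b _ hab
  unfold stdN
  gcongr

section LogLipschitz

variable {f : ℝ → ℝ} {Λ : ℝ}

lemma hasDerivAt_of_differentiable_log (hpos : ∀ u, 0 < f u)
    (hdiff : Differentiable ℝ fun s => log (f s)) (u : ℝ) :
    HasDerivAt f (f u * deriv (fun s => log (f s)) u) u := by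
  have h := (hdiff u).hasDerivAt.exp
  simpa only [exp_log (hpos _)] using h

lemma abs_deriv_le_mul_of_abs_deriv_log_le (hpos : ∀ u, 0 < f u)
    (hdiff : Differentiable ℝ fun s => log (f s))
    (hld : ∀ u, |deriv (fun s => log (f s)) u| ≤ Λ) (u : ℝ) :
    |deriv f u| ≤ Λ * f u := by
  rw [(hasDerivAt_of_differentiable_log hpos hdiff u).deriv, abs_mul, abs_of_pos (hpos u),
    mul_comm]
  exact mul_le_mul_of_nonneg_right (hld u) (hpos u).le

lemma mul_exp_neg_le_of_abs_deriv_log_le (hpos : ∀ u, 0 < f u)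
    (hdiff : Differentiable ℝ fun s => log (f s))
    (hld : ∀ u, |deriv (fun s => log (f s)) u| ≤ Λ) (u v : ℝ) :
    f v * exp (-(Λ * |u - v|)) ≤ f u := by
  have h := Convex.norm_image_sub_le_of_norm_deriv_le (fun x _ => hdiff x)
    (fun x _ => hld x) convex_univ (Set.mem_univ v) (Set.mem_univ u)
  rw [Real.norm_eq_abs, Real.norm_eq_abs] at h
  calc f v * exp (-(Λ * |u - v|)) = exp (log (f v) - Λ * |u - v|) := by
        rw [exp_sub, exp_log (hpos v), exp_neg, div_eq_mul_inv]
    _ ≤ exp (log (f u)) := exp_le_exp.mpr (by linarith [neg_abs_le (log (f u) - log (f v))])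
    _ = f u := exp_log (hpos u)

end LogLipschitz

lemma apply_le_of_monotoneOn_Iic_of_antitoneOn_Ici {α β : Type*} [LinearOrder α] [Preorder β]
    {f : α → β} {a : α} (h₁ : MonotoneOn f (Set.Iic a)) (h₂ : AntitoneOn f (Set.Ici a))
    (u : α) : f u ≤ f a := by
  rcases le_total u a with h | h
  · exact h₁ h le_rfl h
  · exact h₂ le_rfl h h

noncomputable def gaussSmooth (f : ℝ → ℝ) (y : ℝ) : ℝ := ∫ s, stdN s * f (y - s)

lemma conv_eq_gaussSmooth (γ₀ : ℝ → ℝ) (c x : ℝ) :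
    conv γ₀ c x = gaussSmooth γ₀ (x - c) := by
  unfold conv gaussSmooth
  rw [← integral_sub_left_eq_self _ volume x]
  congr 1 with s
  ring_nf

section GaussSmooth

variable {f : ℝ → ℝ} {M : ℝ}

lemma integrable_stdN_mul_comp_sub (hf : Measurable f) (hM : ∀ u, |f u| ≤ M) (y : ℝ) :
    Integrable fun s => stdN s * f (y - s) :=
  integrable_stdN.mul_bdd (hf.comp (by fun_prop)).aestronglyMeasurable
    (ae_of_all _ fun s => by simpa using hM (y - s))

lemma hasDerivAt_gaussSmooth {M' : ℝ} (hf : Differentiable ℝ f) (hM : ∀ u, |f u| ≤ M)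
    (hM' : ∀ u, |deriv f u| ≤ M') (y : ℝ) :
    HasDerivAt (gaussSmooth f) (gaussSmooth (deriv f) y) y :=
  (hasDerivAt_integral_of_dominated_loc_of_deriv_le (F := fun z s => stdN s * f (z - s))
    (bound := fun s => M' * stdN s) (s := Set.univ) Filter.univ_mem
    (Filter.Eventually.of_forall fun z =>
      (integrable_stdN_mul_comp_sub hf.continuous.measurable hM z).aestronglyMeasurable)
    (integrable_stdN_mul_comp_sub hf.continuous.measurable hM y)
    (integrable_stdN_mul_comp_sub (measurable_deriv f) hM' y).aestronglyMeasurable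
    (ae_of_all _ fun s z _ => by
      rw [norm_mul, Real.norm_eq_abs, Real.norm_eq_abs, abs_of_pos (stdN_pos s), mul_comm]
      exact mul_le_mul_of_nonneg_right (hM' _) (stdN_pos s).le)
    (integrable_stdN.const_mul M')
    (ae_of_all _ fun s z _ =>
      (((hf (z - s)).hasDerivAt.comp_sub_const z s).const_mul (stdN s)))).2

lemma abs_gaussSmooth_le {g : ℝ → ℝ} {Λ : ℝ} (hf : Measurable f) (hM : ∀ u, |f u| ≤ M)
    (hg : ∀ u, |g u| ≤ Λ * f u) (y : ℝ) :
    |gaussSmooth g y| ≤ Λ * gaussSmooth f y :=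
  calc |gaussSmooth g y| ≤ ∫ s, |stdN s * g (y - s)| := abs_integral_le_integral_abs
    _ ≤ ∫ s, Λ * (stdN s * f (y - s)) := by
        refine integral_mono_of_nonneg (ae_of_all _ fun s => abs_nonneg _)
          ((integrable_stdN_mul_comp_sub hf hM y).const_mul Λ) (ae_of_all _ fun s => ?_)
        dsimp only
        rw [abs_mul, abs_of_pos (stdN_pos s), mul_left_comm]
        exact mul_le_mul_of_nonneg_left (hg _) (stdN_pos s).le
    _ = Λ * gaussSmooth f y := integral_const_mul _ _

lemma mul_exp_neg_le_gaussSmooth {a Λ : ℝ} (ha : 0 ≤ a) (hΛ : 0 ≤ Λ) (hf : Measurable f)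
    (hM : ∀ u, |f u| ≤ M) (hlow : ∀ u, a * exp (-(Λ * |u|)) ≤ f u) (y : ℝ) :
    stdN 1 * a * exp (-Λ) * exp (-(Λ * |y|)) ≤ gaussSmooth f y := by
  have hnonneg : ∀ u, 0 ≤ stdN u * f (y - u) := fun u =>
    mul_nonneg (stdN_pos u).le ((mul_nonneg ha (exp_pos _).le).trans (hlow _))
  calc stdN 1 * a * exp (-Λ) * exp (-(Λ * |y|))
      = stdN 1 * (a * exp (-(Λ * (|y| + 1)))) * volume.real (Set.Icc (0 : ℝ) 1) := by
        rw [Real.volume_real_Icc_of_le zero_le_one, sub_zero, mul_one,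
          show -(Λ * (|y| + 1)) = -Λ + -(Λ * |y|) by ring, exp_add]
        ring
    _ ≤ ∫ s in Set.Icc 0 1, stdN s * f (y - s) := by
        refine setIntegral_ge_of_const_le_real measurableSet_Icc (by simp) (fun s hs => ?_)
          (integrable_stdN_mul_comp_sub hf hM y).integrableOn
        have hys : |y - s| ≤ |y| + 1 := by
          have := abs_sub y s
          rw [abs_of_nonneg hs.1] at this
          linarith [hs.2]
        have hf_ys : a * exp (-(Λ * (|y| + 1))) ≤ f (y - s) :=
          (mul_le_mul_of_nonneg_left (exp_le_exp.mpr (by nlinarith)) ha).trans (hlow _)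
        exact mul_le_mul (antitoneOn_stdN hs.1 (Set.mem_Ici.mpr zero_le_one) hs.2) hf_ys
          (mul_nonneg ha (exp_pos _).le) (stdN_pos s).le
    _ ≤ gaussSmooth f y :=
        setIntegral_le_integral (integrable_stdN_mul_comp_sub hf hM y) (ae_of_all _ hnonneg)

end GaussSmooth

section Marginal

variable {γ₀ : ℝ → ℝ} {Λ M w c x : ℝ}

lemma hasDerivAt_marg {M' : ℝ} (hd : Differentiable ℝ γ₀) (hM : ∀ u, |γ₀ u| ≤ M)
    (hM' : ∀ u, |deriv γ₀ u| ≤ M') :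
    HasDerivAt (marg γ₀ w c)
      ((1 - w) * (-x * stdN x) + w * gaussSmooth (deriv γ₀) (x - c)) x := by
  have hconv : HasDerivAt (conv γ₀ c) (gaussSmooth (deriv γ₀) (x - c)) x := by
    simp_rw [funext (conv_eq_gaussSmooth γ₀ c)]
    exact (hasDerivAt_gaussSmooth hd hM hM' (x - c)).comp_sub_const x c
  exact ((hasDerivAt_stdN x).const_mul (1 - w)).add (hconv.const_mul w)

lemma abs_deriv_log_marg_mul_le (hΛ : 0 ≤ Λ) (hw : 0 ≤ w) (hw1 : w ≤ 1)
    (hd : Differentiable ℝ γ₀) (hM : ∀ u, |γ₀ u| ≤ M)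
    (hγ' : ∀ u, |deriv γ₀ u| ≤ Λ * γ₀ u)
    (hm : 0 < marg γ₀ w c x) :
    |deriv (fun y => log (marg γ₀ w c y)) x| * marg γ₀ w c x ≤
      (1 - w) * (|x| * stdN x) + Λ * marg γ₀ w c x := by
  have hM' : ∀ u, |deriv γ₀ u| ≤ Λ * M := fun u =>
    (hγ' u).trans (mul_le_mul_of_nonneg_left ((le_abs_self _).trans (hM u)) hΛ)
  have hG := abs_gaussSmooth_le hd.continuous.measurable hM hγ' (x - c)
  rw [((hasDerivAt_marg hd hM hM').log hm.ne').deriv, abs_div, abs_of_pos hm,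
    div_mul_cancel₀ _ hm.ne']
  calc |(1 - w) * (-x * stdN x) + w * gaussSmooth (deriv γ₀) (x - c)|
      ≤ |(1 - w) * (-x * stdN x)| + |w * gaussSmooth (deriv γ₀) (x - c)| := abs_add_le _ _
    _ = (1 - w) * (|x| * stdN x) + w * |gaussSmooth (deriv γ₀) (x - c)| := by
        rw [abs_mul, abs_mul, abs_mul, abs_neg, abs_of_nonneg (sub_nonneg.mpr hw1),
          abs_of_pos (stdN_pos x), abs_of_nonneg hw]
    _ ≤ (1 - w) * (|x| * stdN x) + Λ * marg γ₀ w c x := by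
        rw [marg, conv_eq_gaussSmooth]
        nlinarith [mul_le_mul_of_nonneg_left hG hw,
          mul_nonneg hΛ (mul_nonneg (sub_nonneg.mpr hw1) (stdN_pos x).le)]

end Marginal

lemma abs_mul_stdN_le_exp_neg {Λ L c x : ℝ} (hΛ : 0 ≤ Λ) (hL : 0 ≤ L)
    (hx : 4 * (1 + Λ) * (1 + √(|c| + L)) ≤ |x|) :
    |x| * stdN x ≤ exp (-(L + Λ * |x - c|)) := by
  set R := √(|c| + L)
  have hR : 0 ≤ R := sqrt_nonneg _
  have hR2 : R ^ 2 = |c| + L := sq_sqrt (by positivity)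
  have hxc : |x - c| ≤ |x| + |c| := abs_sub _ _
  have hRx : 4 * (1 + Λ) * R ≤ |x| := by nlinarith
  have h₁ := mul_le_mul_of_nonneg_left hx (abs_nonneg x)
  have h₂ := mul_le_mul_of_nonneg_left hRx (by positivity : 0 ≤ 4 * (1 + Λ) * R)
  have h₃ : 2 * (1 + Λ) * R ^ 2 ≤ 16 * (1 + Λ) ^ 2 * R ^ 2 := by
    nlinarith [mul_nonneg (mul_nonneg hΛ (by positivity : (0 : ℝ) ≤ 1 + Λ)) (sq_nonneg R)]
  have hquad : |x| + (L + Λ * |x - c|) ≤ x ^ 2 / 2 := by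
    rw [← sq_abs x]
    nlinarith [mul_le_mul_of_nonneg_left hxc hΛ, mul_nonneg hΛ hL, mul_nonneg hΛ (abs_nonneg x),
      abs_nonneg x, abs_nonneg c, congrArg (Λ * ·) hR2]
  calc |x| * stdN x ≤ exp |x| * exp (-x ^ 2 / 2) :=
        mul_le_mul ((le_add_of_nonneg_right zero_le_one).trans (add_one_le_exp _)) (stdN_le_exp x)
          (stdN_pos x).le (exp_pos _).le
    _ = exp (|x| - x ^ 2 / 2) := by rw [← exp_add]; ring_nf
    _ ≤ exp (-(L + Λ * |x - c|)) := exp_le_exp.mpr (by linarith)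

lemma one_sub_mul_abs_mul_stdN_le {w c x Λ K m : ℝ} (hw : 0 < w) (hw1 : w ≤ 1) (hΛ : 0 ≤ Λ)
    (hK : 0 < K) (hφ : (1 - w) * stdN x ≤ m) (hlow : w * (K * exp (-(Λ * |x - c|))) ≤ m) :
    (1 - w) * (|x| * stdN x) ≤ (4 * (1 + Λ) * (1 + √(|c| + log (1 / w))) + 1 / K) * m := by
  set T := 4 * (1 + Λ) * (1 + √(|c| + log (1 / w)))
  have hm : 0 ≤ m := (mul_nonneg hw.le (mul_nonneg hK.le (exp_pos _).le)).trans hlow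
  have hTm : 0 ≤ T * m := by positivity
  have hKm : 0 ≤ 1 / K * m := by positivity
  rcases le_or_gt |x| T with hxT | hxT
  · calc (1 - w) * (|x| * stdN x) = |x| * ((1 - w) * stdN x) := by ring
      _ ≤ T * m := mul_le_mul hxT hφ (mul_nonneg (sub_nonneg.mpr hw1) (stdN_pos x).le)
          (by positivity)
      _ ≤ _ := by linarith
  · have hL : 0 ≤ log (1 / w) := log_nonneg (one_le_one_div hw hw1)
    have hw' : exp (-log (1 / w)) = w := by rw [one_div, log_inv, neg_neg, exp_log hw]
    calc (1 - w) * (|x| * stdN x) ≤ |x| * stdN x :=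
          mul_le_of_le_one_left (mul_nonneg (abs_nonneg x) (stdN_pos x).le) (by linarith)
      _ ≤ exp (-(log (1 / w) + Λ * |x - c|)) := abs_mul_stdN_le_exp_neg hΛ hL hxT.le
      _ = 1 / K * (w * (K * exp (-(Λ * |x - c|)))) := by
          rw [neg_add, exp_add, hw']; field_simp
      _ ≤ 1 / K * m := mul_le_mul_of_nonneg_left hlow (by positivity)
      _ ≤ _ := by linarith

theorem stmt10_general (γ₀ : ℝ → ℝ) (Λ : ℝ)
    (hpos : ∀ u, 0 < γ₀ u)
    (hmode : ∃ m₀ : ℝ, MonotoneOn γ₀ (Set.Iic m₀) ∧ AntitoneOn γ₀ (Set.Ici m₀))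
    (hdiff : Differentiable ℝ fun s => Real.log (γ₀ s))
    (hld : ∀ u, |deriv (fun s => Real.log (γ₀ s)) u| ≤ Λ) :
    ∃ C > (0:ℝ), ∀ w c x : ℝ, 0 < w → w ≤ 1 →
      |(x + deriv (fun y => Real.log (marg γ₀ w c y)) x) - x| ≤
        C * (1 + Real.sqrt (|c| + Real.log (1 / w))) := by
  obtain ⟨m₀, hmono, hanti⟩ := hmode
  have hΛ : 0 ≤ Λ := (abs_nonneg _).trans (hld 0)
  have hM : ∀ u, |γ₀ u| ≤ γ₀ m₀ := fun u =>
    (abs_of_pos (hpos u)).trans_le (apply_le_of_monotoneOn_Iic_of_antitoneOn_Ici hmono hanti u)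
  have hd : Differentiable ℝ γ₀ := fun u =>
    (hasDerivAt_of_differentiable_log hpos hdiff u).differentiableAt
  have hsmooth := mul_exp_neg_le_gaussSmooth (hpos 0).le hΛ hd.continuous.measurable hM
    (fun u => by simpa using mul_exp_neg_le_of_abs_deriv_log_le hpos hdiff hld u 0)
  set K := stdN 1 * γ₀ 0 * exp (-Λ)
  have hK : 0 < K := mul_pos (mul_pos (stdN_pos 1) (hpos 0)) (exp_pos _)
  refine ⟨4 * (1 + Λ) + 1 / K + Λ, by positivity, fun w c x hw hw1 => ?_⟩
  have hmarg : marg γ₀ w c x = (1 - w) * stdN x + w * gaussSmooth γ₀ (x - c) := by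
    rw [marg, conv_eq_gaussSmooth]
  have hφ : 0 ≤ (1 - w) * stdN x := mul_nonneg (sub_nonneg.mpr hw1) (stdN_pos x).le
  have hwK : 0 < w * (K * exp (-(Λ * |x - c|))) := mul_pos hw (mul_pos hK (exp_pos _))
  have hG := mul_le_mul_of_nonneg_left (hsmooth (x - c)) hw.le
  have hlow : w * (K * exp (-(Λ * |x - c|))) ≤ marg γ₀ w c x := by linarith
  have hm : 0 < marg γ₀ w c x := hwK.trans_le hlow
  have hR := sqrt_nonneg (|c| + log (1 / w))
  rw [add_sub_cancel_left, ← mul_le_mul_iff_of_pos_right hm]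
  calc _ ≤ (1 - w) * (|x| * stdN x) + Λ * marg γ₀ w c x :=
        abs_deriv_log_marg_mul_le hΛ hw.le hw1 hd hM
          (abs_deriv_le_mul_of_abs_deriv_log_le hpos hdiff hld) hm
    _ ≤ (4 * (1 + Λ) * (1 + √(|c| + log (1 / w))) + 1 / K + Λ) * marg γ₀ w c x := by
        linarith [one_sub_mul_abs_mul_stdN_le hw hw1 hΛ hK (by linarith) hlow]
    _ ≤ _ := by nlinarith [mul_nonneg (mul_nonneg (by positivity : 0 ≤ 1 / K + Λ) hR) hm.le]

/-- Bounded shrinkage property of the posterior mean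
`ζ(x;w,c) = x + ∇ log m(x;w,c)`: for a unimodal positive density `γ₀` with
`|(log γ₀)'| ≤ Λ`, there is `C > 0` (depending only on `Λ` and `γ₀`) with
`|ζ(x;w,c) − x| ≤ C(1 + √(|c| + log(1/w)))` for all `x`, all `0 < w ≤ 1` and all `c`. -/
theorem stmt10 (γ₀ : ℝ → ℝ) (Λ : ℝ) (hΛ : 0 < Λ)
    (hpos : ∀ u, 0 < γ₀ u) (hint : Integrable γ₀) (hdens : ∫ u : ℝ, γ₀ u = 1)
    (hmode : ∃ m₀ : ℝ, MonotoneOn γ₀ (Set.Iic m₀) ∧ AntitoneOn γ₀ (Set.Ici m₀))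
    (hdiff : Differentiable ℝ fun s => Real.log (γ₀ s))
    (hld : ∀ u, |deriv (fun s => Real.log (γ₀ s)) u| ≤ Λ) :
    ∃ C > (0:ℝ), ∀ w c x : ℝ, 0 < w → w ≤ 1 →
      |(x + deriv (fun y => Real.log (marg γ₀ w c y)) x) - x| ≤
        C * (1 + Real.sqrt (|c| + Real.log (1 / w))) :=
  stmt10_general γ₀ Λ hpos hmode hdiff hld
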